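/- Let L be an orthomodular lattice and let n ≥ 2. For a, b : Fin n → L, let Ω(a,b) denote the conditions: a(i) ⊥ a(j) for all i ≠ j, and a(i) ⊥ b(i) for all i. Then the following two conditions on L are equivalent: (i) (equation Eₙ) for all a, b with Ω(a,b): (⨆_i a(i)) ∩ ⨅_i (a(i) ∪ b(i)) ≤ ⨆_i b(i); (ii) (equation E*ₙ) for all a, b and r ∈ L with Ω(a,b) and r ⊥ ⨆_i a(i): ((⨆_i a(i)) ∪ r) ∩ ⨅_i (a(i) ∪ b(i)) ≤ (⨆_i b(i)) ∪ r. -/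
import Mathlib


/-- An ortholattice: a bounded lattice with an orthocomplementation. -/
class Ortholattice (α : Type*) extends Lattice α, BoundedOrder α where
  ocompl : α → α
  sup_ocompl : ∀ a : α, a ⊔ ocompl a = ⊤
  inf_ocompl : ∀ a : α, a ⊓ ocompl a = ⊥
  ocompl_anti : ∀ a b : α, a ≤ b → ocompl b ≤ ocompl a
  ocompl_ocompl : ∀ a : α, ocompl (ocompl a) = a

postfix:max "ᗮ" => Ortholattice.ocompl

/-- An orthomodular lattice. -/
class OrthomodularLattice (α : Type*) extends Ortholattice α where
  orthomodular : ∀ a b : α, a ≤ b → b = a ⊔ (aᗮ ⊓ b)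

/-- The Sasaki hook `x → y = x′ ∪ (x ∩ y)`. -/
def oimp {α : Type*} [Ortholattice α] (x y : α) : α := xᗮ ⊔ (x ⊓ y)

section Aux
variable {α : Type*} [Ortholattice α]

lemma aux_le_ocompl_comm {x y : α} (h : x ≤ yᗮ) : y ≤ xᗮ := by
  have := Ortholattice.ocompl_anti _ _ h
  rwa [Ortholattice.ocompl_ocompl] at this

lemma aux_compl_sup (x y : α) : (x ⊔ y)ᗮ = xᗮ ⊓ yᗮ := by
  apply le_antisymm
  · exact le_inf (Ortholattice.ocompl_anti _ _ le_sup_left)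
      (Ortholattice.ocompl_anti _ _ le_sup_right)
  · apply aux_le_ocompl_comm
    exact sup_le (aux_le_ocompl_comm inf_le_left) (aux_le_ocompl_comm inf_le_right)

end Aux

section Aux2
variable {α : Type*} [OrthomodularLattice α]

/-- If `x ⊥ r` then `rᗮ ⊓ (x ⊔ r) = x`. -/
lemma aux_orth_cancel {x r : α} (h : x ≤ rᗮ) : rᗮ ⊓ (x ⊔ r) = x := by
  have hx : x ≤ rᗮ ⊓ (x ⊔ r) := le_inf h le_sup_left
  have := OrthomodularLattice.orthomodular x (rᗮ ⊓ (x ⊔ r)) hx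
  rw [this]
  have : xᗮ ⊓ (rᗮ ⊓ (x ⊔ r)) ≤ (x ⊔ r)ᗮ ⊓ (x ⊔ r) := by
    rw [aux_compl_sup]
    exact le_inf (le_inf inf_le_left (inf_le_right.trans inf_le_left))
      (inf_le_right.trans inf_le_right)
  have hb : (x ⊔ r)ᗮ ⊓ (x ⊔ r) = ⊥ := by rw [inf_comm, Ortholattice.inf_ocompl]
  rw [hb] at this
  simp [le_bot_iff.mp this]

/-- If `r ⊥ x` and `r ≤ c` then `(x ⊔ r) ⊓ c ≤ (x ⊓ c) ⊔ r`. -/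
lemma aux_dist {x r c : α} (hrx : x ≤ rᗮ) (hrc : r ≤ c) :
    (x ⊔ r) ⊓ c ≤ (x ⊓ c) ⊔ r := by
  have hr : r ≤ (x ⊔ r) ⊓ c := le_inf le_sup_right hrc
  have hom := OrthomodularLattice.orthomodular r ((x ⊔ r) ⊓ c) hr
  rw [hom]
  have : rᗮ ⊓ ((x ⊔ r) ⊓ c) ≤ x ⊓ c := by
    refine le_inf ?_ (inf_le_right.trans inf_le_right)
    have : rᗮ ⊓ ((x ⊔ r) ⊓ c) ≤ rᗮ ⊓ (x ⊔ r) :=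
      le_inf inf_le_left (inf_le_right.trans inf_le_left)
    rwa [aux_orth_cancel hrx] at this
  calc r ⊔ (rᗮ ⊓ ((x ⊔ r) ⊓ c)) ≤ r ⊔ (x ⊓ c) := sup_le_sup_left this r
    _ = (x ⊓ c) ⊔ r := sup_comm _ _

end Aux2

theorem En_iff_EstarN {α : Type*} [OrthomodularLattice α] (n : ℕ) (hn : 2 ≤ n) :
    (∀ a b : Fin n → α,
      (∀ i j : Fin n, i ≠ j → a i ≤ (a j)ᗮ) → (∀ i : Fin n, a i ≤ (b i)ᗮ) →
      Finset.univ.sup a ⊓ Finset.univ.inf (fun i => a i ⊔ b i) ≤ Finset.univ.sup b) ↔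
    (∀ a b : Fin n → α, ∀ r : α,
      (∀ i j : Fin n, i ≠ j → a i ≤ (a j)ᗮ) → (∀ i : Fin n, a i ≤ (b i)ᗮ) →
      r ≤ (Finset.univ.sup a)ᗮ →
      (Finset.univ.sup a ⊔ r) ⊓ Finset.univ.inf (fun i => a i ⊔ b i) ≤
        Finset.univ.sup b ⊔ r) := by
  haveI : Nonempty (Fin n) := ⟨⟨0, by omega⟩⟩
  constructor
  · intro E a b r hΩ1 hΩ2 hr
    set x := Finset.univ.sup a with hx
    -- modified b
    set b' : Fin n → α := fun i => b i ⊔ r with hb'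
    have hx_r : x ≤ rᗮ := aux_le_ocompl_comm hr
    have hΩ2' : ∀ i : Fin n, a i ≤ (b' i)ᗮ := by
      intro i
      rw [hb']
      simp only [aux_compl_sup]
      exact le_inf (hΩ2 i) ((Finset.le_sup (Finset.mem_univ i)).trans hx_r)
    have hE := E a b' hΩ1 hΩ2'
    have hsupb' : Finset.univ.sup b' = Finset.univ.sup b ⊔ r := by
      have : Finset.univ.sup b' = Finset.univ.sup b ⊔ Finset.univ.sup (fun _ : Fin n => r) := by
        rw [← Finset.sup_sup]; rfl
      rw [this, Finset.sup_const Finset.univ_nonempty]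
    set c := Finset.univ.inf (fun i => a i ⊔ b' i) with hc
    have hrc : r ≤ c := by
      apply Finset.le_inf
      intro i _
      exact le_sup_right.trans le_sup_right
    have hmono : Finset.univ.inf (fun i => a i ⊔ b i) ≤ c := by
      apply Finset.inf_mono_fun
      intro i _
      exact sup_le_sup_left le_sup_left _
    calc (x ⊔ r) ⊓ Finset.univ.inf (fun i => a i ⊔ b i)
        ≤ (x ⊔ r) ⊓ c := inf_le_inf_left _ hmono
      _ ≤ (x ⊓ c) ⊔ r := aux_dist hx_r hrc
      _ ≤ Finset.univ.sup b' ⊔ r := sup_le_sup_right hE r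
      _ = (Finset.univ.sup b ⊔ r) ⊔ r := by rw [hsupb']
      _ = Finset.univ.sup b ⊔ r := by rw [sup_assoc, sup_idem]
  · intro E a b hΩ1 hΩ2
    have := E a b ⊥ hΩ1 hΩ2 bot_le
    simpa using this
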